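/- Let (M, E, obj, sess) be a finite labeled causal DAG, V_A, V_B ⊆ M two cuts equipped with strict total orders ≺_A on V_A and ≺_B on V_B, and fix a target configuration (C_M, O_M). Suppose V_A and V_B are each closed under deps_{C_M}. Then V_A ∪ V_B is closed under deps_{C_M}, and the following are equivalent: (i) for every O_M-class K there exists a strict total order on K ∩ (V_A ∪ V_B) extending both ≺_A and ≺_B restricted to K (the two views merge under (C_M, O_M)); (ii) within every O_M-class, ≺_A and ≺_B agree on all pairs they both order, i.e. there is no class K and m₁, m₂ ∈ K with m₁ ≺_A m₂ and m₂ ≺_B m₁; (iii) within every O_M-class, the union relation ≺_A ∪ ≺_B restricted to the class is acyclic. -/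
import Mathlib


/-- Closure scopes. -/
inductive CScope
  | none | object | session | explicit
deriving DecidableEq

/-- Ordering scopes. -/
inductive OScope
  | trivial | object | all
deriving DecidableEq

/-- A finite labeled causal DAG: a finite type of messages with an irreflexive
acyclic edge relation and object/session labels. -/
structure LDag where
  M : Type
  [fin : Fintype M]
  O0 : Type
  S0 : Type
  E : M → M → Prop
  irr : Irreflexive E
  acyc : Irreflexive (Relation.TransGen E)
  obj : M → O0
  sess : M → S0

/-- The closure filters `deps_C`. -/
def LDag.deps (G : LDag) : CScope → G.M → Set G.M
  | .none, _ => ∅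
  | .object, m => {m' | G.E m' m ∧ G.obj m' = G.obj m}
  | .session, m => {m' | G.E m' m ∧ G.sess m' = G.sess m}
  | .explicit, m => {m' | G.E m' m}

/-- Same-class relation of an ordering scope. -/
def LDag.sameClass (G : LDag) : OScope → G.M → G.M → Prop
  | .trivial, a, b => a = b
  | .object, a, b => G.obj a = G.obj b
  | .all, _, _ => True

/-- `V` is closed under the filter `deps_C`. -/
def LDag.closedUnder (G : LDag) (C : CScope) (V : Set G.M) : Prop :=
  ∀ m ∈ V, G.deps C m ⊆ V

/-- `V` is a per-class prefix for the ordering scope `O` w.r.t. `prec`. -/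
def LDag.isPrefix (G : LDag) (O : OScope) (prec : G.M → G.M → Prop) (V : Set G.M) : Prop :=
  ∀ m ∈ V, ∀ m', G.sameClass O m' m → prec m' m → m' ∈ V

/-- A cut `V` is admissible under the configuration `(C, O)` w.r.t. `(E, prec)`. -/
def LDag.admissible (G : LDag) (prec : G.M → G.M → Prop) (C : CScope) (O : OScope)
    (V : Set G.M) : Prop :=
  G.closedUnder C V ∧ G.isPrefix O prec V

/-- `prec` refines the causal order (causal arbitration). -/
def LDag.refines (G : LDag) (prec : G.M → G.M → Prop) : Prop :=
  ∀ m' m, G.E m' m → prec m' m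

/-- A configuration is a pair of a closure scope and an ordering scope. -/
abbrev Config := CScope × OScope

/-- Readability under causal arbitration: every `A`-admissible cut is
`B`-admissible, on every finite labeled causal DAG and every strict linear
order refining the causal edges. -/
def Readable (A B : Config) : Prop :=
  ∀ G : LDag, ∀ prec : G.M → G.M → Prop,
    IsStrictTotalOrder G.M prec → G.refines prec →
    ∀ V : Set G.M, G.admissible prec A.1 A.2 V → G.admissible prec B.1 B.2 V

/-- The chain `trivial < object < all` on ordering scopes, as a rank. -/
def OScope.rank : OScope → ℕ
  | .trivial => 0
  | .object => 1
  | .all => 2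

/-- The κ map: the closure entailed by an ordering scope. -/
def kappa : OScope → CScope
  | .trivial => .none
  | .object => .object
  | .all => .explicit

/-- `t` is a strict total order on the set `S`. -/
def StrictTotalOn {M : Type*} (t : M → M → Prop) (S : Set M) : Prop :=
  (∀ a ∈ S, ¬ t a a) ∧
  (∀ a ∈ S, ∀ b ∈ S, ∀ c ∈ S, t a b → t b c → t a c) ∧
  (∀ a ∈ S, ∀ b ∈ S, a ≠ b → t a b ∨ t b a)

lemma sameClass_refl' (G : LDag) (O : OScope) (a : G.M) : G.sameClass O a a := by
  cases O
  · rfl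
  · rfl
  · trivial

lemma sameClass_symm' (G : LDag) (O : OScope) {a b : G.M} (h : G.sameClass O a b) :
    G.sameClass O b a := by
  cases O
  · exact h.symm
  · exact h.symm
  · trivial

lemma sameClass_trans' (G : LDag) (O : OScope) {a b c : G.M} (h1 : G.sameClass O a b)
    (h2 : G.sameClass O b c) : G.sameClass O a c := by
  cases O
  · exact h1.trans h2
  · exact h1.trans h2
  · trivial

/-- **Mergeability.** Let `V_A, V_B` be two cuts of a labeled
causal DAG, each carrying a strict total order and each closed under the
target closure filter `deps_{C_M}`.  Then the union is `deps_{C_M}`-closed,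
and the following are equivalent: (i) within every `O_M`-class there is a
strict total order on the class's part of `V_A ∪ V_B` extending both source
orders; (ii) no `O_M`-class contains a pair ordered oppositely by the two
source orders; (iii) within each `O_M`-class the union of the two source
orders is acyclic. -/
theorem mergeability
    (G : LDag) (VA VB : Set G.M)
    (precA precB : G.M → G.M → Prop)
    (hA : StrictTotalOn precA VA) (hAdom : ∀ a b, precA a b → a ∈ VA ∧ b ∈ VA)
    (hB : StrictTotalOn precB VB) (hBdom : ∀ a b, precB a b → a ∈ VB ∧ b ∈ VB)
    (CM : CScope) (OM : OScope)
    (hclA : G.closedUnder CM VA) (hclB : G.closedUnder CM VB) :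
    G.closedUnder CM (VA ∪ VB) ∧
    ((∀ m₀ : G.M, ∃ t : G.M → G.M → Prop,
        StrictTotalOn t ({x | G.sameClass OM x m₀} ∩ (VA ∪ VB)) ∧
        (∀ a b, G.sameClass OM a m₀ → G.sameClass OM b m₀ → precA a b → t a b) ∧
        (∀ a b, G.sameClass OM a m₀ → G.sameClass OM b m₀ → precB a b → t a b))
      ↔ ¬ ∃ m₁ m₂, G.sameClass OM m₁ m₂ ∧ precA m₁ m₂ ∧ precB m₂ m₁) ∧
    ((¬ ∃ m₁ m₂, G.sameClass OM m₁ m₂ ∧ precA m₁ m₂ ∧ precB m₂ m₁)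
      ↔ Irreflexive (Relation.TransGen
          (fun a b => (precA a b ∨ precB a b) ∧ G.sameClass OM a b))) := by
  classical
  set sc := G.sameClass OM with hscdef
  have scr : ∀ a, sc a a := sameClass_refl' G OM
  have scs : ∀ {a b}, sc a b → sc b a := fun h => sameClass_symm' G OM h
  have sct : ∀ {a b c}, sc a b → sc b c → sc a c := fun h1 h2 => sameClass_trans' G OM h1 h2
  set R := fun a b => (precA a b ∨ precB a b) ∧ G.sameClass OM a b with hRdef
  have irrA : ∀ {a}, ¬ precA a a := fun {a} h => hA.1 a (hAdom a a h).1 h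
  have irrB : ∀ {a}, ¬ precB a a := fun {a} h => hB.1 a (hBdom a a h).1 h
  have transA : ∀ {a b c}, precA a b → precA b c → precA a c := fun {a b c} h1 h2 =>
    hA.2.1 a (hAdom a b h1).1 b (hAdom a b h1).2 c (hAdom b c h2).2 h1 h2
  have transB : ∀ {a b c}, precB a b → precB b c → precB a c := fun {a b c} h1 h2 =>
    hB.2.1 a (hBdom a b h1).1 b (hBdom a b h1).2 c (hBdom b c h2).2 h1 h2
  -- (ii) -> (iii)
  have hIItoIII : (¬ ∃ m₁ m₂, G.sameClass OM m₁ m₂ ∧ precA m₁ m₂ ∧ precB m₂ m₁) →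
      Irreflexive (Relation.TransGen R) := by
    intro hnc
    have conf : ∀ {a b}, sc a b → precA a b → precB b a → False :=
      fun {a b} h1 h2 h3 => hnc ⟨a, b, h1, h2, h3⟩
    have aba : ∀ {a b c d}, precA a b → sc b c → precB b c → precA c d → precA a d := by
      intro a b c d h1 hsc h2 h3
      rcases hA.2.2 b (hAdom a b h1).2 c (hAdom c d h3).1
          (fun he => irrB (he ▸ h2)) with h | h
      · exact transA (transA h1 h) h3
      · exact (conf (scs hsc) h h2).elim
    have bab : ∀ {a b c d}, precB a b → sc b c → precA b c → precB c d → precB a d := by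
      intro a b c d h1 hsc h2 h3
      rcases hB.2.2 b (hBdom a b h1).2 c (hBdom c d h3).1
          (fun he => irrA (he ▸ h2)) with h | h
      · exact transB (transB h1 h) h3
      · exact (conf hsc h2 h).elim
    have key : ∀ {a b}, Relation.TransGen R a b →
        ((precA a b ∨ precB a b ∨ (∃ x, precA a x ∧ sc a x ∧ precB x b) ∨
          (∃ x, precB a x ∧ sc a x ∧ precA x b)) ∧ sc a b) := by
      intro a b h
      induction h with
      | single h => exact ⟨h.1.imp id Or.inl, h.2⟩
      | @tail b c hab hbc ih =>
        obtain ⟨hS, hsab⟩ := ih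
        have hsbc : sc b c := hbc.2
        have hsac : sc a c := sct hsab hsbc
        refine ⟨?_, hsac⟩
        rcases hbc.1 with hstep | hstep
        · rcases hS with h | h | ⟨x, h1, h2, h3⟩ | ⟨x, h1, h2, h3⟩
          · exact Or.inl (transA h hstep)
          · exact Or.inr (Or.inr (Or.inr ⟨b, h, hsab, hstep⟩))
          · exact Or.inl (aba h1 (sct (scs h2) hsab) h3 hstep)
          · exact Or.inr (Or.inr (Or.inr ⟨x, h1, h2, transA h3 hstep⟩))
        · rcases hS with h | h | ⟨x, h1, h2, h3⟩ | ⟨x, h1, h2, h3⟩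
          · exact Or.inr (Or.inr (Or.inl ⟨b, h, hsab, hstep⟩))
          · exact Or.inr (Or.inl (transB h hstep))
          · exact Or.inr (Or.inr (Or.inl ⟨x, h1, h2, transB h3 hstep⟩))
          · exact Or.inr (Or.inl (bab h1 (sct (scs h2) hsab) h3 hstep))
    intro a h
    obtain ⟨hS, _⟩ := key h
    rcases hS with h | h | ⟨x, h1, h2, h3⟩ | ⟨x, h1, h2, h3⟩
    · exact irrA h
    · exact irrB h
    · exact conf h2 h1 h3
    · exact conf (scs h2) h3 h1
  -- (iii) -> (i)
  have hIIItoI : Irreflexive (Relation.TransGen R) →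
      (∀ m₀ : G.M, ∃ t : G.M → G.M → Prop,
        StrictTotalOn t ({x | G.sameClass OM x m₀} ∩ (VA ∪ VB)) ∧
        (∀ a b, G.sameClass OM a m₀ → G.sameClass OM b m₀ → precA a b → t a b) ∧
        (∀ a b, G.sameClass OM a m₀ → G.sameClass OM b m₀ → precB a b → t a b)) := by
    intro hirr m₀
    set r : G.M → G.M → Prop := fun a b => a = b ∨ Relation.TransGen R a b with hrdef
    haveI hpo : IsPartialOrder G.M r :=
      { refl := fun a => Or.inl rfl
        trans := by
          intro a b c h1 h2
          rcases h1 with rfl | h1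
          · exact h2
          rcases h2 with rfl | h2
          · exact Or.inr h1
          · exact Or.inr (h1.trans h2)
        antisymm := by
          intro a b h1 h2
          rcases h1 with rfl | h1
          · rfl
          rcases h2 with rfl | h2
          · rfl
          · exact absurd (h1.trans h2) (hirr a) }
    obtain ⟨s, hlin, hsub⟩ := extend_partialOrder r
    haveI := hlin
    refine ⟨fun a b => s a b ∧ a ≠ b, ⟨?_, ?_, ?_⟩, ?_, ?_⟩
    · exact fun a _ h => h.2 rfl
    · intro a _ b _ c _ h1 h2
      refine ⟨trans_of s h1.1 h2.1, fun he => h1.2 (antisymm_of s h1.1 (he ▸ h2.1))⟩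
    · intro a _ b _ hne
      rcases total_of s a b with h | h
      · exact Or.inl ⟨h, hne⟩
      · exact Or.inr ⟨h, hne.symm⟩
    · intro a b ha hb h
      have hr : R a b := ⟨Or.inl h, sct ha (scs hb)⟩
      refine ⟨hsub a b (Or.inr (Relation.TransGen.single hr)), ?_⟩
      rintro rfl
      exact hirr a (Relation.TransGen.single hr)
    · intro a b ha hb h
      have hr : R a b := ⟨Or.inr h, sct ha (scs hb)⟩
      refine ⟨hsub a b (Or.inr (Relation.TransGen.single hr)), ?_⟩
      rintro rfl
      exact hirr a (Relation.TransGen.single hr)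
  -- (i) -> (ii)
  have hItoII : (∀ m₀ : G.M, ∃ t : G.M → G.M → Prop,
        StrictTotalOn t ({x | G.sameClass OM x m₀} ∩ (VA ∪ VB)) ∧
        (∀ a b, G.sameClass OM a m₀ → G.sameClass OM b m₀ → precA a b → t a b) ∧
        (∀ a b, G.sameClass OM a m₀ → G.sameClass OM b m₀ → precB a b → t a b)) →
      ¬ ∃ m₁ m₂, G.sameClass OM m₁ m₂ ∧ precA m₁ m₂ ∧ precB m₂ m₁ := by
    rintro h ⟨m₁, m₂, hsc, h1, h2⟩
    obtain ⟨t, ht, hEA, hEB⟩ := h m₂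
    have t12 := hEA m₁ m₂ hsc (scr m₂) h1
    have t21 := hEB m₂ m₁ (scr m₂) hsc h2
    have hm1 : m₁ ∈ {x | G.sameClass OM x m₂} ∩ (VA ∪ VB) :=
      ⟨hsc, Or.inl (hAdom m₁ m₂ h1).1⟩
    have hm2 : m₂ ∈ {x | G.sameClass OM x m₂} ∩ (VA ∪ VB) :=
      ⟨scr m₂, Or.inl (hAdom m₁ m₂ h1).2⟩
    exact ht.1 m₁ hm1 (ht.2.1 m₁ hm1 m₂ hm2 m₁ hm1 t12 t21)
  -- (iii) -> (ii)
  have hIIItoII : Irreflexive (Relation.TransGen R) →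
      ¬ ∃ m₁ m₂, G.sameClass OM m₁ m₂ ∧ precA m₁ m₂ ∧ precB m₂ m₁ := by
    rintro hirr ⟨m₁, m₂, hsc, h1, h2⟩
    have s1 : Relation.TransGen R m₁ m₂ := Relation.TransGen.single ⟨Or.inl h1, hsc⟩
    have s2 : Relation.TransGen R m₂ m₁ := Relation.TransGen.single ⟨Or.inr h2, scs hsc⟩
    exact hirr m₁ (s1.trans s2)
  refine ⟨?_, ⟨hItoII, fun h => hIIItoI (hIItoIII h)⟩, ⟨hIItoIII, hIIItoII⟩⟩
  intro m hm
  rcases hm with h | h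
  · exact fun x hx => Or.inl (hclA m h hx)
  · exact fun x hx => Or.inr (hclB m h hx)
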